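/- arXiv:2411.07033 — 8 statements merged into one kernel-verified Lean document; each statement's English description precedes it below -/
import Mathlib

section
/- Let G be a locally compact group acting measurably and measure-preservingly on a probability space (X, m), and suppose the Koopman representation on L²₀(X) (functions of mean zero) has a spectral gap. If (vᵢ) is a sequence of nonnegative functions in L¹(X) with ‖vᵢ‖₁ = 1 that is asymptotically G-invariant in the L¹ sense, then vᵢ converges in L¹(X) to the constant function 1. -/
/-!
If `‖vᵢ - 1‖₁` does not tend to `0`, it stays above some `ε > 0` along a subsequence. The square
roots `fᵢ = √vᵢ` are unit vectors of `L²`; they are asymptotically invariant because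
`‖√a - √b‖₂² ≤ ‖a - b‖₁`, and Cauchy–Schwarz applied to `vᵢ - 1 = (fᵢ - 1)(fᵢ + 1)` gives
`‖vᵢ - 1‖₁ ≤ 2 ‖fᵢ - ∫ fᵢ‖₂`. Hence the normalised functions `(fᵢ - ∫ fᵢ) / ‖fᵢ - ∫ fᵢ‖₂` are
asymptotically invariant unit vectors of `L²₀`, contradicting the spectral gap.
-/

open MeasureTheory Filter
open scoped ENNReal

lemma Real.sqrt_sub_sqrt_sq_le_abs_sub {a b : ℝ} (ha : 0 ≤ a) (hb : 0 ≤ b) :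
    (√a - √b) ^ 2 ≤ |a - b| := by
  have hsum : |√a - √b| ≤ √a + √b :=
    abs_sub_le_iff.2 ⟨by linarith [Real.sqrt_nonneg b], by linarith [Real.sqrt_nonneg a]⟩
  calc (√a - √b) ^ 2 = |√a - √b| * |√a - √b| := by rw [← sq_abs, sq]
    _ ≤ |√a - √b| * (√a + √b) := by gcongr
    _ = |a - b| := by
      rw [← abs_of_nonneg (by positivity : 0 ≤ √a + √b), ← abs_mul]
      congr 1
      linear_combination Real.sq_sqrt ha - Real.sq_sqrt hb

namespace MeasureTheory

variable {X : Type*} [MeasurableSpace X] {μ : Measure X}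

lemma sq_eLpNorm_two {E : Type*} [NormedAddCommGroup E] (g : X → E) :
    eLpNorm g 2 μ ^ 2 = ∫⁻ x, ‖g x‖ₑ ^ 2 ∂μ := by
  rw [eLpNorm_eq_lintegral_rpow_enorm_toReal two_ne_zero ENNReal.ofNat_ne_top]
  simp only [ENNReal.toReal_ofNat, ENNReal.rpow_two, one_div]
  rw [← ENNReal.rpow_two, ← ENNReal.rpow_mul, inv_mul_cancel₀ two_ne_zero, ENNReal.rpow_one]

lemma MemLp.sq_eLpNorm_two {g : X → ℝ} (hg : MemLp g 2 μ) :
    eLpNorm g 2 μ ^ 2 = ENNReal.ofReal (∫ x, g x ^ 2 ∂μ) := by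
  rw [MeasureTheory.sq_eLpNorm_two,
    ofReal_integral_eq_lintegral_ofReal hg.integrable_sq (.of_forall fun x => sq_nonneg _)]
  simp [Real.enorm_eq_ofReal_abs, ← ENNReal.ofReal_pow (abs_nonneg _)]

lemma sq_eLpNorm_sqrt_sub_sqrt_le {w u : X → ℝ} (hw : 0 ≤ᵐ[μ] w) (hu : 0 ≤ᵐ[μ] u) :
    eLpNorm (fun x => √(w x) - √(u x)) 2 μ ^ 2 ≤ eLpNorm (fun x => w x - u x) 1 μ := by
  rw [sq_eLpNorm_two, eLpNorm_one_eq_lintegral_enorm]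
  refine lintegral_mono_ae ?_
  filter_upwards [hw, hu] with x hwx hux
  rw [Real.enorm_eq_ofReal_abs, Real.enorm_eq_ofReal_abs, ← ENNReal.ofReal_pow (abs_nonneg _),
    sq_abs]
  exact ENNReal.ofReal_le_ofReal (Real.sqrt_sub_sqrt_sq_le_abs_sub hwx hux)

lemma integral_sub_const_sq [IsProbabilityMeasure μ] {g : X → ℝ} (hg : MemLp g 2 μ) (a : ℝ) :
    ∫ x, (g x - a) ^ 2 ∂μ = ∫ x, g x ^ 2 ∂μ - 2 * a * ∫ x, g x ∂μ + a ^ 2 := by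
  have hsq : Integrable (fun x => g x ^ 2) μ := hg.integrable_sq
  have hlin : Integrable (fun x => 2 * a * g x) μ := (hg.integrable one_le_two).const_mul _
  have hquad : Integrable (fun x => g x ^ 2 - 2 * a * g x) μ := hsq.sub hlin
  have hexpand : ∀ x, (g x - a) ^ 2 = g x ^ 2 - 2 * a * g x + a ^ 2 := fun x => by ring
  simp_rw [hexpand]
  rw [integral_add hquad (integrable_const _), integral_sub hsq hlin, integral_const_mul]
  simp

lemma integral_mul_sub_integral [IsProbabilityMeasure μ] {g : X → ℝ} (hg : Integrable g μ)
    (a : ℝ) : ∫ x, a * (g x - ∫ y, g y ∂μ) ∂μ = 0 := by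
  rw [integral_const_mul, integral_sub hg (integrable_const _)]
  simp

lemma eLpNorm_toReal_inv_mul_self {p : ℝ≥0∞} {g : X → ℝ} (h0 : eLpNorm g p μ ≠ 0)
    (htop : eLpNorm g p μ ≠ ∞) :
    eLpNorm (fun x => (eLpNorm g p μ).toReal⁻¹ * g x) p μ = 1 := by
  change eLpNorm ((eLpNorm g p μ).toReal⁻¹ • g) p μ = 1
  rw [eLpNorm_const_smul, ← ENNReal.toReal_inv, Real.enorm_toReal (ENNReal.inv_ne_top.2 h0),
    ENNReal.inv_mul_cancel h0 htop]

lemma eLpNorm_sq_sub_one_le [IsProbabilityMeasure μ] {f : X → ℝ} (hf : MemLp f 2 μ)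
    (hf1 : ∫ x, f x ^ 2 ∂μ = 1) :
    eLpNorm (fun x => f x ^ 2 - 1) 1 μ ≤ 2 * eLpNorm (fun x => f x - ∫ y, f y ∂μ) 2 μ := by
  have hL2 : ∀ a : ℝ, MemLp (fun x => f x - a) 2 μ := fun a => hf.sub (memLp_const a)
  have hfactor : (fun x => f x ^ 2 - 1) = (fun x => f x - 1) • fun x => f x - (-1) := by
    ext x; change _ = (f x - 1) * (f x - -1); ring
  have hholder : eLpNorm (fun x => f x ^ 2 - 1) 1 μ
      ≤ eLpNorm (fun x => f x - 1) 2 μ * eLpNorm (fun x => f x - (-1)) 2 μ := by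
    rw [hfactor]
    exact eLpNorm_smul_le_mul_eLpNorm (hL2 _).1 (hL2 _).1
  have hsq : (eLpNorm (fun x => f x - 1) 2 μ * eLpNorm (fun x => f x - (-1)) 2 μ) ^ 2
      = (2 * eLpNorm (fun x => f x - ∫ y, f y ∂μ) 2 μ) ^ 2 := by
    -- with `c = ∫ f` and `∫ f ^ 2 = 1`, this is `(2 - 2c) (2 + 2c) = 4 (1 - c ^ 2)`
    rw [mul_pow, mul_pow, (hL2 _).sq_eLpNorm_two, (hL2 _).sq_eLpNorm_two,
      (hL2 _).sq_eLpNorm_two,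
      ← ENNReal.ofReal_mul (integral_nonneg fun x => sq_nonneg _),
      integral_sub_const_sq hf, integral_sub_const_sq hf, integral_sub_const_sq hf, hf1,
      show (2 : ℝ≥0∞) ^ 2 = ENNReal.ofReal (2 ^ 2) by norm_num,
      ← ENNReal.ofReal_mul (by norm_num)]
    congr 1
    ring
  exact hholder.trans ((ENNReal.pow_le_pow_left_iff two_ne_zero).1 hsq.le)

lemma memLp_two_sqrt {v : X → ℝ} (hv : MemLp v 1 μ) :
    MemLp (fun x => √(v x)) 2 μ := by
  refine (memLp_two_iff_integrable_sq (Real.continuous_sqrt.comp_aestronglyMeasurable hv.1)).2 ?_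
  simp_rw [Real.sq_sqrt']
  exact (memLp_one_iff_integrable.1 hv).pos_part

lemma integral_eq_toReal_eLpNorm_one {v : X → ℝ} (hv : AEStronglyMeasurable v μ)
    (hv0 : 0 ≤ᵐ[μ] v) : ∫ x, v x ∂μ = (eLpNorm v 1 μ).toReal := by
  rw [← integral_congr_ae (hv0.mono fun x hx => Real.norm_of_nonneg hx),
    integral_norm_eq_lintegral_enorm hv, ← eLpNorm_one_eq_lintegral_enorm]

lemma eLpNorm_sub_one_le_two_mul_eLpNorm_sqrt_sub_integral [IsProbabilityMeasure μ] {v : X → ℝ}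
    (hv : MemLp v 1 μ) (hv0 : 0 ≤ᵐ[μ] v) (hvn : eLpNorm v 1 μ = 1) :
    eLpNorm (fun x => v x - 1) 1 μ ≤ 2 * eLpNorm (fun x => √(v x) - ∫ y, √(v y) ∂μ) 2 μ := by
  have hsq : (fun x => √(v x) ^ 2) =ᵐ[μ] v := hv0.mono fun x hx => Real.sq_sqrt hx
  have hint : ∫ x, √(v x) ^ 2 ∂μ = 1 := by
    rw [integral_congr_ae hsq, integral_eq_toReal_eLpNorm_one hv.1 hv0, hvn, ENNReal.toReal_one]
  calc eLpNorm (fun x => v x - 1) 1 μ = eLpNorm (fun x => √(v x) ^ 2 - 1) 1 μ :=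
        eLpNorm_congr_ae (hsq.mono fun x hx => by simp only [hx])
    _ ≤ _ := eLpNorm_sq_sub_one_le (memLp_two_sqrt hv) hint

def IsAsymptoticallyInvariant (G : Type*) [TopologicalSpace G] [SMul G X] (μ : Measure X)
    (p : ℝ≥0∞) (f : ℕ → X → ℝ) : Prop :=
  ∀ K : Set G, IsCompact K → ∀ ε : ℝ≥0∞, 0 < ε → ∀ᶠ n in atTop,
    ∀ g ∈ K, eLpNorm (fun x => f n (g • x) - f n x) p μ ≤ ε

namespace IsAsymptoticallyInvariant

variable {G : Type*} [TopologicalSpace G] [SMul G X] {p : ℝ≥0∞} {f : ℕ → X → ℝ}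

lemma comp_tendsto (hf : IsAsymptoticallyInvariant G μ p f) {φ : ℕ → ℕ}
    (hφ : Tendsto φ atTop atTop) : IsAsymptoticallyInvariant G μ p fun n => f (φ n) :=
  fun K hK ε hε => hφ.eventually (hf K hK ε hε)

lemma sqrt (hf : IsAsymptoticallyInvariant G μ 1 f)
    (hqmp : ∀ g : G, Measure.QuasiMeasurePreserving (fun x => g • x) μ μ)
    (hf0 : ∀ n, 0 ≤ᵐ[μ] f n) : IsAsymptoticallyInvariant G μ 2 fun n x => √(f n x) := by
  intro K hK ε hε
  filter_upwards [hf K hK (ε ^ 2) (ENNReal.pow_pos hε 2)] with n hn g hg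
  have hshift : 0 ≤ᵐ[μ] fun x => f n (g • x) := (hqmp g).ae (hf0 n)
  exact (ENNReal.pow_le_pow_left_iff two_ne_zero).1
    ((sq_eLpNorm_sqrt_sub_sqrt_le hshift (hf0 n)).trans (hn g hg))

lemma mul_sub_const (hf : IsAsymptoticallyInvariant G μ p f) {a c : ℕ → ℝ} {C : ℝ≥0∞}
    (hC : C ≠ ∞) (ha : ∀ n, ‖a n‖ₑ ≤ C) :
    IsAsymptoticallyInvariant G μ p fun n x => a n * (f n x - c n) := by
  intro K hK ε hε
  filter_upwards [hf K hK (ε / C) (ENNReal.div_pos hε.ne' hC)] with n hn g hg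
  have hdiff : (fun x => a n * (f n (g • x) - c n) - a n * (f n x - c n))
      = a n • fun x => f n (g • x) - f n x := by
    ext x; simp only [Pi.smul_apply, smul_eq_mul]; ring
  calc eLpNorm (fun x => a n * (f n (g • x) - c n) - a n * (f n x - c n)) p μ
      = ‖a n‖ₑ * eLpNorm (fun x => f n (g • x) - f n x) p μ := by
        rw [hdiff, eLpNorm_const_smul]
    _ ≤ C * (ε / C) := by gcongr; exacts [ha n, hn g hg]
    _ ≤ ε := ENNReal.mul_div_le

end IsAsymptoticallyInvariant

end MeasureTheory

theorem tendsto_one_of_asymptotically_invariant_L1_general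
    {G X : Type*} [Group G] [TopologicalSpace G]
    [MeasurableSpace X] (m : Measure X) [IsProbabilityMeasure m] [MulAction G X]
    (hpres : ∀ g : G, MeasurePreserving (fun x : X => g • x) m m)
    (hgap : ¬ ∃ f : ℕ → X → ℝ,
      (∀ n, MemLp (f n) 2 m) ∧ (∀ n, ∫ x, f n x ∂m = 0) ∧ (∀ n, eLpNorm (f n) 2 m = 1) ∧
        ∀ K : Set G, IsCompact K → ∀ ε : ℝ≥0∞, 0 < ε → ∀ᶠ n in Filter.atTop,
          ∀ g ∈ K, eLpNorm (fun x => f n (g • x) - f n x) 2 m ≤ ε)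
    (v : ℕ → X → ℝ)
    (hv1 : ∀ i, MemLp (v i) 1 m) (hv0 : ∀ i, 0 ≤ᵐ[m] v i)
    (hvn : ∀ i, eLpNorm (v i) 1 m = 1)
    (hvinv : ∀ K : Set G, IsCompact K → ∀ ε : ℝ≥0∞, 0 < ε → ∀ᶠ i in Filter.atTop,
      ∀ g ∈ K, eLpNorm (fun x => v i (g • x) - v i x) 1 m ≤ ε) :
    Filter.Tendsto (fun i => eLpNorm (fun x => v i x - 1) 1 m) Filter.atTop (nhds 0) := by
  by_contra hcon
  obtain ⟨ε, hε, hfreq⟩ : ∃ ε > 0, ∃ᶠ i in atTop, ε < eLpNorm (fun x => v i x - 1) 1 m := by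
    simpa [ENNReal.tendsto_nhds_zero, frequently_atTop] using hcon
  obtain ⟨φ, hφ, hfar⟩ := extraction_of_frequently_atTop hfreq
  set f : ℕ → X → ℝ := fun n x => √(v (φ n) x)
  set e : ℕ → ℝ≥0∞ := fun n => eLpNorm (fun x => f n x - ∫ y, f n y ∂m) 2 m
  have hf : ∀ n, MemLp (f n) 2 m := fun n => memLp_two_sqrt (hv1 _)
  have he_top : ∀ n, e n ≠ ∞ := fun n => ((hf n).sub (memLp_const _)).eLpNorm_ne_top
  have he_gt : ∀ n, ε / 2 < e n := fun n => ENNReal.div_lt_of_lt_mul' <| (hfar n).trans_le <|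
    eLpNorm_sub_one_le_two_mul_eLpNorm_sqrt_sub_integral (hv1 _) (hv0 _) (hvn _)
  refine hgap ⟨fun n x => (e n).toReal⁻¹ * (f n x - ∫ y, f n y ∂m),
    fun n => ((hf n).sub (memLp_const _)).const_mul _,
    fun n => integral_mul_sub_integral ((hf n).integrable one_le_two) _,
    fun n => eLpNorm_toReal_inv_mul_self (he_gt n).ne_bot (he_top n), ?_⟩
  refine ((IsAsymptoticallyInvariant.comp_tendsto hvinv hφ.tendsto_atTop).sqrt
    (fun g => (hpres g).quasiMeasurePreserving) fun n => hv0 _).mul_sub_const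
    (C := (ε / 2)⁻¹) (ENNReal.inv_ne_top.2 (ENNReal.half_pos hε.ne').ne') fun n => ?_
  rw [← ENNReal.toReal_inv, Real.enorm_toReal (ENNReal.inv_ne_top.2 (he_gt n).ne_bot)]
  exact ENNReal.inv_le_inv.2 (he_gt n).le

/-- If the Koopman representation of a locally compact group `G` on `L²₀(X,m)` of a
probability-measure-preserving action has a spectral gap, then any asymptotically
`G`-invariant sequence of nonnegative `L¹`-normalized functions converges in `L¹` to
the constant function `1`. -/
theorem tendsto_one_of_asymptotically_invariant_L1
    {G X : Type*} [Group G] [TopologicalSpace G] [IsTopologicalGroup G] [LocallyCompactSpace G]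
    [MeasurableSpace X] (m : Measure X) [IsProbabilityMeasure m] [MulAction G X]
    (hmeas : ∀ g : G, Measurable fun x : X => g • x)
    (hpres : ∀ g : G, MeasurePreserving (fun x : X => g • x) m m)
    (hgap : ¬ ∃ f : ℕ → X → ℝ,
      (∀ n, MemLp (f n) 2 m) ∧ (∀ n, ∫ x, f n x ∂m = 0) ∧ (∀ n, eLpNorm (f n) 2 m = 1) ∧
        ∀ K : Set G, IsCompact K → ∀ ε : ℝ≥0∞, 0 < ε → ∀ᶠ n in Filter.atTop,
          ∀ g ∈ K, eLpNorm (fun x => f n (g • x) - f n x) 2 m ≤ ε)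
    (v : ℕ → X → ℝ)
    (hv1 : ∀ i, MemLp (v i) 1 m) (hv0 : ∀ i, 0 ≤ᵐ[m] v i)
    (hvn : ∀ i, eLpNorm (v i) 1 m = 1)
    (hvinv : ∀ K : Set G, IsCompact K → ∀ ε : ℝ≥0∞, 0 < ε → ∀ᶠ i in Filter.atTop,
      ∀ g ∈ K, eLpNorm (fun x => v i (g • x) - v i x) 1 m ≤ ε) :
    Filter.Tendsto (fun i => eLpNorm (fun x => v i x - 1) 1 m) Filter.atTop (nhds 0) :=
  tendsto_one_of_asymptotically_invariant_L1_general m hpres hgap v hv1 hv0 hvn hvinv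
end

section
/- Let G be a compactly generated locally compact group with compact abelianization and K a compact symmetric generating identity neighborhood. Then there exists α = α(G) > 0 such that for any unitary representation of G on a Hilbert space V and any vector v ∈ V: if k₀ ∈ K attains sup_{k∈K} ‖(1 − k)v‖, then sup_{k∈K} ‖(1 − k)(1 − k₀)v‖ ≥ α ‖(1 − k₀)v‖. -/
/-!
Suppose no `α` works, and pick counterexamples with `α = 1/(n+1)`. The normalised coefficients
`φₙ(g) = ⟨(1 - g) vₙ, uₙ⟩ / ‖uₙ‖²` satisfy `φₙ(k₀ₙ) = 1`; by maximality of `k₀ₙ` they are bounded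
by the word length `|g|`, and they are additive up to a defect `|a⁻¹| |b| / (n+1)`. Along an
ultrafilter they converge to an additive map bounded by `1` on `K`. Comparing `φ(gʲ)` with
`j φ(g)` for `g` near `1` shows that such a map is small near `1`, hence continuous, hence zero.
The same power argument applied to the `φₙ` themselves gives equicontinuity at `1` in the limit,
so `φₙ(k₀ₙ) → 0`, a contradiction.
-/

open Filter Topology
open scoped InnerProductSpace

theorem IsCompact.exists_tendsto_ultrafilter {X ι : Type*} [TopologicalSpace X] {s : Set X}
    (hs : IsCompact s) (F : Ultrafilter ι) {z : ι → X} (hz : ∀ i, z i ∈ s) :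
    ∃ x ∈ s, Tendsto z F (𝓝 x) :=
  hs.ultrafilter_le_nhds (F.map z) (le_principal_iff.2 (Ultrafilter.mem_map.2 (univ_mem' hz)))

theorem mul_div_sq_le_of_le_mul {x y c p q : ℝ} (hx₀ : 0 ≤ x) (hy₀ : 0 ≤ y) (hpq : 0 ≤ p * q)
    (hx : x ≤ p * c) (hy : y ≤ q * c) : x * y / c ^ 2 ≤ p * q := by
  rcases eq_or_ne c 0 with rfl | hc
  · simpa using hpq
  rw [div_le_iff₀ (by positivity)]
  calc x * y ≤ (p * c) * (q * c) := mul_le_mul hx hy hy₀ (hx₀.trans hx)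
    _ = p * q * c ^ 2 := by ring

section WordLength

variable {G : Type*} [Group G] (K : Set G)

/-- Junk value `0` when `g` is not a product of elements of `K`. -/
noncomputable def wordLength (g : G) : ℕ :=
  sInf {n | ∃ L : List G, (∀ x ∈ L, x ∈ K) ∧ L.length = n ∧ L.prod = g}

theorem wordLength_le_one {k : G} (hk : k ∈ K) : wordLength K k ≤ 1 :=
  Nat.sInf_le ⟨[k], by simpa using hk, rfl, by simp⟩

theorem exists_list_length_eq_wordLength (hKsymm : K⁻¹ = K) (hKgen : Subgroup.closure K = ⊤)
    (g : G) : ∃ L : List G, (∀ x ∈ L, x ∈ K) ∧ L.length = wordLength K g ∧ L.prod = g := by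
  have hg : g ∈ Submonoid.closure (K ∪ K⁻¹) := by
    rw [← Subgroup.closure_toSubmonoid, hKgen]; trivial
  rw [hKsymm, Set.union_self] at hg
  obtain ⟨L, hL, hprod⟩ := Submonoid.exists_list_of_mem_closure hg
  exact Nat.sInf_mem (s := {n | ∃ L : List G, (∀ x ∈ L, x ∈ K) ∧ L.length = n ∧ L.prod = g})
    ⟨L.length, L, hL, rfl, hprod⟩

end WordLength

section UnitaryRepresentation

variable {G : Type*} [Group G] {V : Type*} [NormedAddCommGroup V] [InnerProductSpace ℂ V]
  (π : G →* (V ≃ₗᵢ[ℂ] V))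

theorem sub_map_mul_apply (v : V) (a b : G) :
    v - π (a * b) v = (v - π a v) + π a (v - π b v) := by
  simp [map_sub]

theorem inner_map_apply_right (u w : V) (a : G) : ⟪u, π a w⟫_ℂ = ⟪π a⁻¹ u, w⟫_ℂ := by
  rw [map_inv, LinearIsometryEquiv.coe_inv, LinearIsometryEquiv.inner_map_eq_flip,
    LinearIsometryEquiv.symm_symm]

theorem norm_sub_list_prod_apply_le {K : Set G} {w : V} {β : ℝ}
    (hβ : ∀ k ∈ K, ‖w - π k w‖ ≤ β) {L : List G} (hL : ∀ x ∈ L, x ∈ K) :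
    ‖w - π L.prod w‖ ≤ L.length * β := by
  induction L with
  | nil => simp
  | cons x L ih =>
    rw [List.prod_cons, sub_map_mul_apply]
    calc ‖(w - π x w) + π x (w - π L.prod w)‖
        ≤ ‖w - π x w‖ + ‖w - π L.prod w‖ :=
          (norm_add_le _ _).trans_eq (by rw [LinearIsometryEquiv.norm_map])
      _ ≤ β + L.length * β :=
          add_le_add (hβ x (hL x List.mem_cons_self))
            (ih fun y hy => hL y (List.mem_cons_of_mem x hy))
      _ = (x :: L).length * β := by simp only [List.length_cons]; push_cast; ring

theorem norm_sub_apply_le_wordLength_mul {K : Set G} (hKsymm : K⁻¹ = K)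
    (hKgen : Subgroup.closure K = ⊤) {w : V} {β : ℝ} (hβ : ∀ k ∈ K, ‖w - π k w‖ ≤ β) (g : G) :
    ‖w - π g w‖ ≤ wordLength K g * β := by
  obtain ⟨L, hL, hlen, rfl⟩ := exists_list_length_eq_wordLength K hKsymm hKgen g
  rw [← hlen]
  exact norm_sub_list_prod_apply_le π hβ hL

/-- The paper's `φ(g) = ⟨(1 - g) v, u⟩ / ‖u‖²` with `u = (1 - k₀) v`; Mathlib's inner product is
conjugate-linear in its first argument, so `u` comes first. -/
noncomputable def approxCharacter (v : V) (k₀ g : G) : ℂ :=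
  ⟪v - π k₀ v, v - π g v⟫_ℂ / (‖v - π k₀ v‖ : ℂ) ^ 2

variable (v : V) (k₀ : G)

theorem approxCharacter_self (h : v - π k₀ v ≠ 0) : approxCharacter π v k₀ k₀ = 1 := by
  rw [approxCharacter, inner_self_eq_norm_sq_to_K]
  exact div_self (by simpa using h)

theorem approxCharacter_mul_sub (a b : G) :
    approxCharacter π v k₀ (a * b) - approxCharacter π v k₀ a - approxCharacter π v k₀ b =
      ⟪π a⁻¹ (v - π k₀ v) - (v - π k₀ v), v - π b v⟫_ℂ / (‖v - π k₀ v‖ : ℂ) ^ 2 := by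
  simp only [approxCharacter, sub_map_mul_apply π v a b, inner_add_right, inner_map_apply_right]
  simp only [map_sub, inner_sub_left]
  ring

theorem norm_inner_div_norm_sq_le (u x y : V) :
    ‖⟪x, y⟫_ℂ / (‖u‖ : ℂ) ^ 2‖ ≤ ‖x‖ * ‖y‖ / ‖u‖ ^ 2 := by
  rw [norm_div, norm_pow, Complex.norm_real, norm_norm]
  gcongr
  exact norm_inner_le_norm x y

theorem norm_approxCharacter_le_wordLength {K : Set G} (hKsymm : K⁻¹ = K)
    (hKgen : Subgroup.closure K = ⊤) (hmax : ∀ k ∈ K, ‖v - π k v‖ ≤ ‖v - π k₀ v‖) (g : G) :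
    ‖approxCharacter π v k₀ g‖ ≤ wordLength K g := by
  have h := mul_div_sq_le_of_le_mul (norm_nonneg _) (norm_nonneg _) (by positivity)
    (one_mul _).ge (norm_sub_apply_le_wordLength_mul π hKsymm hKgen hmax g)
  rw [one_mul] at h
  exact (norm_inner_div_norm_sq_le _ _ _).trans h

theorem norm_approxCharacter_mul_sub_le_wordLength {K : Set G} (hKsymm : K⁻¹ = K)
    (hKgen : Subgroup.closure K = ⊤) (hmax : ∀ k ∈ K, ‖v - π k v‖ ≤ ‖v - π k₀ v‖)
    {α : ℝ} (hα : 0 ≤ α)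
    (hsmall : ∀ k ∈ K, ‖(v - π k₀ v) - π k (v - π k₀ v)‖ ≤ α * ‖v - π k₀ v‖) (a b : G) :
    ‖approxCharacter π v k₀ (a * b) - approxCharacter π v k₀ a - approxCharacter π v k₀ b‖ ≤
      wordLength K a⁻¹ * wordLength K b * α := by
  rw [approxCharacter_mul_sub]
  refine (norm_inner_div_norm_sq_le _ _ _).trans ?_
  rw [norm_sub_rev, mul_right_comm]
  refine mul_div_sq_le_of_le_mul (norm_nonneg _) (norm_nonneg _) (by positivity) ?_
    (norm_sub_apply_le_wordLength_mul π hKsymm hKgen hmax b)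
  rw [mul_assoc]
  exact norm_sub_apply_le_wordLength_mul π hKsymm hKgen hsmall a⁻¹

end UnitaryRepresentation

section QuasiAdditive

variable {G : Type*} [Group G] {K : Set G}

theorem nat_mul_norm_le_of_pow_mem {f : G → ℂ} {δ : ℝ} (hf : ∀ k ∈ K, ‖f k‖ ≤ 1)
    (hdef : ∀ a ∈ K, ∀ b ∈ K, ‖f (a * b) - f a - f b‖ ≤ δ) {g : G} {N : ℕ}
    (hg : ∀ j, 0 < j → j ≤ N → g ^ j ∈ K) : N * ‖f g‖ ≤ 1 + N * δ := by
  rcases N.eq_zero_or_pos with rfl | hN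
  · simp
  have hg₁ : g ∈ K := by simpa using hg 1 one_pos hN
  have hpow : ∀ j < N, ‖((j + 1 : ℕ) : ℂ) * f g - f (g ^ (j + 1))‖ ≤ j * δ := by
    intro j
    induction j with
    | zero => simp
    | succ j ih =>
      intro hj
      calc ‖((j + 1 + 1 : ℕ) : ℂ) * f g - f (g ^ (j + 1 + 1))‖
          = ‖(((j + 1 : ℕ) : ℂ) * f g - f (g ^ (j + 1)))
              - (f (g ^ (j + 1) * g) - f (g ^ (j + 1)) - f g)‖ := by
            rw [← pow_succ]; push_cast; ring_nf
        _ ≤ j * δ + δ :=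
            norm_sub_le_of_le (ih (by omega)) (hdef _ (hg (j + 1) (by omega) (by omega)) _ hg₁)
        _ = (j + 1 : ℕ) * δ := by push_cast; ring
  obtain ⟨M, rfl⟩ := Nat.exists_eq_add_of_lt hN
  have hδ : 0 ≤ δ := (norm_nonneg _).trans (hdef g hg₁ g hg₁)
  have hgN : ‖f (g ^ (M + 1))‖ ≤ 1 := hf _ (hg _ (by omega) (by omega))
  have hsub := norm_sub_norm_le (((M + 1 : ℕ) : ℂ) * f g) (f (g ^ (M + 1)))
  rw [norm_mul, Complex.norm_natCast] at hsub
  have hM := hpow M (by omega)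
  push_cast at hsub hM ⊢
  nlinarith

theorem exists_map_mul_tendsto {ι : Type*} (F : Ultrafilter ι) {f : ι → G → ℂ} {δ : ι → ℝ}
    (ℓ : G → ℝ) (hbound : ∀ i g, ‖f i g‖ ≤ ℓ g)
    (hdefect : ∀ i a b, ‖f i (a * b) - f i a - f i b‖ ≤ ℓ a⁻¹ * ℓ b * δ i)
    (hδ : Tendsto δ F (𝓝 0)) :
    ∃ φ : G → ℂ, (∀ a b, φ (a * b) = φ a + φ b) ∧ ∀ g, Tendsto (f · g) F (𝓝 (φ g)) := by
  choose φ _ hφ using fun g => (isCompact_closedBall (0 : ℂ) (ℓ g)).exists_tendsto_ultrafilter F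
    (z := (f · g)) fun i => by simpa using hbound i g
  refine ⟨φ, fun a b => tendsto_nhds_unique (hφ (a * b)) ?_, hφ⟩
  have hdef : Tendsto (fun i => f i (a * b) - f i a - f i b) F (𝓝 0) :=
    squeeze_zero_norm (hdefect · a b) (by simpa using hδ.const_mul (ℓ a⁻¹ * ℓ b))
  simpa using ((hφ a).add (hφ b)).add hdef

variable [TopologicalSpace G] [IsTopologicalGroup G]

theorem eventually_forall_pow_mem (hK : K ∈ 𝓝 1) (N : ℕ) :
    ∀ᶠ x in 𝓝 (1 : G), ∀ j ≤ N, x ^ j ∈ K :=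
  (Set.finite_le_nat N).eventually_all.2 fun j _ =>
    (continuous_pow j).tendsto' 1 1 (one_pow j) hK

theorem tendsto_apply_nhds_zero_of_tendsto_one {ι : Type*} {l : Filter ι} {f : ι → G → ℂ}
    {δ : ι → ℝ} (hK : K ∈ 𝓝 1) (hf : ∀ i, ∀ k ∈ K, ‖f i k‖ ≤ 1)
    (hdef : ∀ i, ∀ a ∈ K, ∀ b ∈ K, ‖f i (a * b) - f i a - f i b‖ ≤ δ i)
    (hδ : Tendsto δ l (𝓝 0)) {g : ι → G} (hg : Tendsto g l (𝓝 1)) :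
    Tendsto (fun i => f i (g i)) l (𝓝 0) := by
  rw [NormedAddGroup.tendsto_nhds_zero]
  intro ε hε
  obtain ⟨N, hN⟩ := exists_nat_gt (2 / ε)
  filter_upwards [hg.eventually (eventually_forall_pow_mem hK N),
    hδ.eventually (gt_mem_nhds (half_pos hε))] with i hgi hδi
  have h := nat_mul_norm_le_of_pow_mem (hf i) (hdef i) fun j _ hj => hgi j hj
  rw [div_lt_iff₀ hε] at hN
  nlinarith [norm_nonneg (f i (g i))]

theorem continuous_of_map_mul_of_norm_le_one {φ : G → ℂ} (hφ : ∀ a b, φ (a * b) = φ a + φ b)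
    (hK : K ∈ 𝓝 1) (hb : ∀ k ∈ K, ‖φ k‖ ≤ 1) : Continuous φ := by
  have h₁ : Tendsto φ (𝓝 1) (𝓝 0) :=
    tendsto_apply_nhds_zero_of_tendsto_one (f := fun _ => φ) (δ := 0) hK (fun _ => hb)
      (fun _ a _ b _ => by simp [hφ]) tendsto_const_nhds tendsto_id
  refine continuous_iff_continuousAt.2 fun x => ?_
  have hx : Tendsto (fun y => x⁻¹ * y) (𝓝 x) (𝓝 1) := by
    simpa using (tendsto_const_nhds (x := x⁻¹)).mul (tendsto_id (x := 𝓝 x))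
  simpa [ContinuousAt, ← hφ] using (h₁.comp hx).const_add (φ x)

theorem tendsto_apply_nhds_zero_of_compact_abelianization
    (habel : ∀ φ : G → ℂ, Continuous φ → (∀ a b : G, φ (a * b) = φ a + φ b) → φ = fun _ => 0)
    (hK : IsCompact K) (hKsymm : K⁻¹ = K) (hKnhds : K ∈ 𝓝 1)
    {ι : Type*} (F : Ultrafilter ι) {f : ι → G → ℂ} {δ : ι → ℝ} (ℓ : G → ℕ)
    (hℓ : ∀ k ∈ K, ℓ k ≤ 1) (hbound : ∀ i g, ‖f i g‖ ≤ ℓ g)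
    (hdefect : ∀ i a b, ‖f i (a * b) - f i a - f i b‖ ≤ ℓ a⁻¹ * ℓ b * δ i)
    (hδ₀ : ∀ i, 0 ≤ δ i) (hδ : Tendsto δ F (𝓝 0)) {k : ι → G} (hk : ∀ i, k i ∈ K) :
    Tendsto (fun i => f i (k i)) F (𝓝 0) := by
  have hf : ∀ i, ∀ k ∈ K, ‖f i k‖ ≤ 1 := fun i k hk =>
    (hbound i k).trans (by exact_mod_cast hℓ k hk)
  have hdef : ∀ i, ∀ a ∈ K, ∀ b ∈ K, ‖f i (a * b) - f i a - f i b‖ ≤ δ i := by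
    intro i a ha b hb
    have hℓab : (ℓ a⁻¹ * ℓ b : ℝ) ≤ 1 := by
      exact_mod_cast Nat.mul_le_mul (hℓ _ (by rwa [← hKsymm, Set.inv_mem_inv])) (hℓ b hb)
    exact (hdefect i a b).trans (by nlinarith [hδ₀ i])
  obtain ⟨φ, hφ_mul, hφ⟩ := exists_map_mul_tendsto F (ℓ ·) hbound hdefect hδ
  have hφK : ∀ k ∈ K, ‖φ k‖ ≤ 1 := fun k hk =>
    le_of_tendsto (hφ k).norm (Eventually.of_forall fun i => hf i k hk)
  have hφ_zero := habel φ (continuous_of_map_mul_of_norm_le_one hφ_mul hKnhds hφK) hφ_mul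
  obtain ⟨k', hk'K, hk'⟩ := hK.exists_tendsto_ultrafilter F hk
  have hg : Tendsto (fun i => k i * k'⁻¹) F (𝓝 1) := by simpa using hk'.mul_const k'⁻¹
  have hdef' : Tendsto (fun i => f i (k i * k'⁻¹ * k') - f i (k i * k'⁻¹) - f i k') F (𝓝 0) :=
    squeeze_zero_norm' ((hg.eventually_mem hKnhds).mono fun i hi => hdef i _ hi _ hk'K) hδ
  simpa [hφ_zero] using ((tendsto_apply_nhds_zero_of_tendsto_one hKnhds hf hdef hδ hg).add
    (hφ k')).add hdef'

end QuasiAdditive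

theorem exists_alpha_differentiation_general
    {G : Type*} [Group G] [TopologicalSpace G] [IsTopologicalGroup G]
    (habel : ∀ φ : G → ℂ, Continuous φ → (∀ a b : G, φ (a * b) = φ a + φ b) →
      φ = fun _ => 0)
    (K : Set G) (hK : IsCompact K) (hKsymm : K⁻¹ = K) (hKnhds : K ∈ nhds (1 : G))
    (hKgen : Subgroup.closure K = ⊤) :
    ∃ α > (0 : ℝ),
      ∀ (V : Type) (_ : NormedAddCommGroup V) (_ : InnerProductSpace ℂ V)
        (_ : CompleteSpace V) (π : G →* (V ≃ₗᵢ[ℂ] V)),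
        (∀ w : V, Continuous fun g : G => π g w) →
        ∀ (v : V) (k₀ : G), k₀ ∈ K →
          (∀ k ∈ K, ‖v - π k v‖ ≤ ‖v - π k₀ v‖) →
          ∃ k ∈ K, α * ‖v - π k₀ v‖ ≤ ‖(v - π k₀ v) - π k (v - π k₀ v)‖ := by
  by_contra hcon
  push Not at hcon
  choose V _ _ _ π _ v k₀ hk₀ hmax hsmall using fun n : ℕ => hcon (1 / (n + 1)) (by positivity)
  have hu : ∀ n, v n - π n (k₀ n) (v n) ≠ 0 := fun n hu => by
    simpa [hu] using hsmall n _ (hk₀ n)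
  have hδ : Tendsto (fun n : ℕ => 1 / ((n : ℝ) + 1)) (Ultrafilter.of atTop : Ultrafilter ℕ) (𝓝 0) :=
    tendsto_one_div_add_atTop_nhds_zero_nat.mono_left (Ultrafilter.of_le _)
  have hlim := tendsto_apply_nhds_zero_of_compact_abelianization habel hK hKsymm hKnhds _
    (f := fun n => approxCharacter (π n) (v n) (k₀ n)) (wordLength K)
    (fun _ => wordLength_le_one K)
    (fun n => norm_approxCharacter_le_wordLength (π n) (v n) (k₀ n) hKsymm hKgen (hmax n))
    (fun n => norm_approxCharacter_mul_sub_le_wordLength (π n) (v n) (k₀ n) hKsymm hKgen (hmax n)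
      (by positivity) fun k hk => (hsmall n k hk).le)
    (fun n => by positivity) hδ hk₀
  simp only [approxCharacter_self _ _ _ (hu _)] at hlim
  exact one_ne_zero (tendsto_nhds_unique tendsto_const_nhds hlim)

/-- For a compactly generated locally compact group `G` with compact abelianization and
a compact symmetric generating identity neighborhood `K`, there exists `α > 0` such that
in any (continuous) unitary representation of `G`, if `k₀ ∈ K` attains
`sup_{k∈K} ‖(1−k)v‖`, then `sup_{k∈K} ‖(1−k)(1−k₀)v‖ ≥ α‖(1−k₀)v‖`. -/
theorem exists_alpha_differentiation
    {G : Type*} [Group G] [TopologicalSpace G] [IsTopologicalGroup G] [LocallyCompactSpace G]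
    (habel : ∀ φ : G → ℂ, Continuous φ → (∀ a b : G, φ (a * b) = φ a + φ b) →
      φ = fun _ => 0)
    (K : Set G) (hK : IsCompact K) (hKsymm : K⁻¹ = K) (hKnhds : K ∈ nhds (1 : G))
    (hKgen : Subgroup.closure K = ⊤) :
    ∃ α > (0 : ℝ),
      ∀ (V : Type) (_ : NormedAddCommGroup V) (_ : InnerProductSpace ℂ V)
        (_ : CompleteSpace V) (π : G →* (V ≃ₗᵢ[ℂ] V)),
        (∀ w : V, Continuous fun g : G => π g w) →
        ∀ (v : V) (k₀ : G), k₀ ∈ K →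
          (∀ k ∈ K, ‖v - π k v‖ ≤ ‖v - π k₀ v‖) →
          ∃ k ∈ K, α * ‖v - π k₀ v‖ ≤ ‖(v - π k₀ v) - π k (v - π k₀ v)‖ :=
  exists_alpha_differentiation_general habel K hK hKsymm hKnhds hKgen
end

section
/- Let G be a locally compact group with Haar measure m_G, f a continuous compactly supported symmetric nonnegative function with m_G(f) = 1, K = supp(f), and G → U(V) a unitary representation. Regard f as the self-adjoint averaging operator on V, with projection-valued measure P. Let αₙ = 1 − 2^{−n} and pₙ = P([αₙ, α_{n+1}]). Then for every v ∈ V and every n ≥ 4: sup_{k∈K} ‖(1 − k)pₙv‖ ≤ 2 sup_{k∈K} ‖(1 − k)f pₙ v‖. -/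
/-!
Write `ε = 2⁻ⁿ` and `u = p v`. On the range of `p` the quadratic form of `1 - A` lies between
`ε/2` and `ε`, so `‖u - A u‖ ≤ ε‖u‖` and hence `‖u - k u‖ ≤ C + 2ε‖u‖ =: M` for every `k ∈ K`.
Averaging `‖u - g u‖² = 2‖u‖² - 2 re⟪u, g u⟫` against `f` gives
`ε‖u‖² ≤ 2 re⟪(1 - A) u, u⟫ ≤ M²`, and for `ε ≤ 1/16` this forces `2ε‖u‖ ≤ C`, i.e. `M ≤ 2C`.
-/

open MeasureTheory RCLike

section
variable {𝕜 E : Type*} [RCLike 𝕜] [NormedAddCommGroup E] [InnerProductSpace 𝕜 E]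

local notation "⟪" x ", " y "⟫" => inner 𝕜 x y

theorem ContinuousLinearMap.opNorm_le_of_abs_re_inner_self_le {T : E →L[𝕜] E}
    (hT : (T : E →ₗ[𝕜] E).IsSymmetric) {c : ℝ} (hc : 0 ≤ c)
    (h : ∀ x, |re ⟪T x, x⟫| ≤ c * ‖x‖ ^ 2) : ‖T‖ ≤ c := by
  rw [T.norm_eq_iSup_rayleighQuotient hT]
  refine ciSup_le fun x => ?_
  rw [rayleighQuotient, reApplyInnerSelf_apply, abs_div, abs_sq]
  exact div_le_of_le_mul₀ (sq_nonneg _) hc (h x)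

theorem IsStarProjection.norm_apply_le_of_abs_re_inner_le [CompleteSpace E] {T p : E →L[𝕜] E}
    (hp : IsStarProjection p) (hT : IsSelfAdjoint T) (hTp : Commute T p) {c : ℝ} (hc : 0 ≤ c)
    (h : ∀ x, |re ⟪T (p x), p x⟫| ≤ c * ‖p x‖ ^ 2) (x : E) : ‖T (p x)‖ ≤ c * ‖p x‖ := by
  have hp_norm : ∀ x, ‖p x‖ ≤ ‖x‖ := fun x =>
    (p.le_opNorm x).trans (mul_le_of_le_one_left (norm_nonneg x) hp.norm_le)
  have hpp : ∀ x, p (p x) = p x := fun x => congr($hp.isIdempotentElem x)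
  have hTp_sa : IsSelfAdjoint (T * p) := (hT.commute_iff hp.isSelfAdjoint).mp hTp
  have hform : ∀ x, ⟪(T * p) x, x⟫ = ⟪T (p x), p x⟫ := fun x => by
    have hrange : T (p x) = p (T (p x)) := by
      simpa only [mul_apply_eq_comp, hpp] using congr($(hTp.eq) (p x))
    calc ⟪(T * p) x, x⟫ = ⟪p (T (p x)), x⟫ := by rw [← hrange]; rfl
      _ = ⟪T (p x), p x⟫ := hp.isSelfAdjoint.isSymmetric _ _
  have hnorm : ‖T * p‖ ≤ c := by
    refine (T * p).opNorm_le_of_abs_re_inner_self_le hTp_sa.isSymmetric hc fun x => ?_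
    rw [hform]
    exact (h x).trans (by gcongr; exact hp_norm x)
  calc ‖T (p x)‖ = ‖(T * p) (p x)‖ := by rw [mul_apply_eq_comp, hpp]
    _ ≤ c * ‖p x‖ := ((T * p).le_opNorm _).trans (by gcongr)

theorem LinearIsometry.norm_sub_apply_le (L : E →ₗᵢ[𝕜] E) (u a : E) :
    ‖u - L u‖ ≤ ‖a - L a‖ + 2 * ‖u - a‖ := by
  calc ‖u - L u‖ = ‖(a - L a) + ((u - a) - L (u - a))‖ := by rw [map_sub]; abel_nf
    _ ≤ ‖a - L a‖ + (‖u - a‖ + ‖L (u - a)‖) :=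
      (norm_add_le _ _).trans (by gcongr; exact norm_sub_le _ _)
    _ = ‖a - L a‖ + 2 * ‖u - a‖ := by rw [L.norm_map]; ring

variable [CompleteSpace E] [NormedSpace ℝ E] [IsScalarTower ℝ 𝕜 E]
  {X : Type*} [MeasurableSpace X] {μ : Measure X} {f : X → ℝ} {w : X → E} {u : E}

theorem integral_mul_norm_sub_sq_eq (hw : ∀ x, ‖w x‖ = ‖u‖) (hf1 : ∫ x, f x ∂μ = 1)
    (hfw : Integrable (fun x => f x • w x) μ) :
    ∫ x, f x * ‖u - w x‖ ^ 2 ∂μ = 2 * (‖u‖ ^ 2 - re ⟪u, ∫ x, f x • w x ∂μ⟫) := by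
  have hf : Integrable f μ := .of_integral_ne_zero (by rw [hf1]; exact one_ne_zero)
  have hre : Integrable (fun x => re ⟪u, f x • w x⟫) μ := (hfw.const_inner u).re
  have hpt : ∀ x, f x * ‖u - w x‖ ^ 2 = 2 * ‖u‖ ^ 2 * f x - 2 * re ⟪u, f x • w x⟫ := fun x => by
    rw [norm_sub_sq (𝕜 := 𝕜), hw, real_smul_eq_coe_smul (K := 𝕜), inner_smul_real_right,
      RCLike.smul_re]
    ring
  simp_rw [hpt]
  rw [integral_sub (hf.const_mul _) (hre.const_mul _), integral_const_mul, integral_const_mul, hf1,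
    integral_re (hfw.const_inner u), integral_inner hfw]
  ring

theorem two_mul_norm_sq_sub_re_inner_integral_le (hw : ∀ x, ‖w x‖ = ‖u‖)
    (hf0 : ∀ x, 0 ≤ f x) (hf1 : ∫ x, f x ∂μ = 1) (hfw : Integrable (fun x => f x • w x) μ)
    {M : ℝ} (hM : ∀ x, f x ≠ 0 → ‖u - w x‖ ≤ M) :
    2 * (‖u‖ ^ 2 - re ⟪u, ∫ x, f x • w x ∂μ⟫) ≤ M ^ 2 := by
  have hf : Integrable f μ := .of_integral_ne_zero (by rw [hf1]; exact one_ne_zero)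
  rw [← integral_mul_norm_sub_sq_eq hw hf1 hfw]
  calc ∫ x, f x * ‖u - w x‖ ^ 2 ∂μ ≤ ∫ x, f x * M ^ 2 ∂μ := by
        refine integral_mono_of_nonneg (.of_forall fun x => mul_nonneg (hf0 x) (sq_nonneg _))
          (hf.mul_const _) (.of_forall fun x => ?_)
        rcases eq_or_ne (f x) 0 with hx | hx
        · simp [hx]
        · exact mul_le_mul_of_nonneg_left (pow_le_pow_left₀ (norm_nonneg _) (hM x hx) 2) (hf0 x)
    _ = M ^ 2 := by rw [integral_mul_const, hf1, one_mul]

end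

theorem two_mul_le_of_mul_sq_le_sq {ε a C : ℝ} (hε : 0 ≤ ε) (hε16 : ε ≤ 1 / 16) (ha : 0 ≤ a)
    (hC : 0 ≤ C) (h : ε * a ^ 2 ≤ (C + 2 * (ε * a)) ^ 2) : 2 * (ε * a) ≤ C := by
  have hsq : (4 * (ε * a)) ^ 2 ≤ (C + 2 * (ε * a)) ^ 2 := by
    have : 16 * ε * (ε * a ^ 2) ≤ ε * a ^ 2 := by
      nlinarith [mul_nonneg hε (sq_nonneg a)]
    nlinarith
  have := (pow_le_pow_iff_left₀ (by positivity) (by positivity) two_ne_zero).mp hsq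
  linarith

theorem spectral_window_smoothing_general
    {G : Type*} [Group G] [TopologicalSpace G] [MeasurableSpace G] (μ : Measure G)
    {V : Type*} [NormedAddCommGroup V] [InnerProductSpace ℂ V] [CompleteSpace V]
    (π : G →* (V ≃ₗᵢ[ℂ] V))
    (f : G → ℝ) (hf0 : ∀ g, 0 ≤ f g) (hf1 : ∫ g, f g ∂μ = 1)
    (K : Set G) (hKsupp : K = tsupport f)
    (A : V →L[ℂ] V) (hAint : ∀ v : V, A v = ∫ g, f g • π g v ∂μ)
    (hAsa : IsSelfAdjoint A)
    (n : ℕ) (hn : 4 ≤ n)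
    (p : V →L[ℂ] V) (hpidem : p.comp p = p) (hpsa : IsSelfAdjoint p)
    (hcomm : A.comp p = p.comp A)
    (hlow : ∀ w : V,
      (1 - (2 : ℝ) ^ (-(n : ℤ))) * ‖p w‖ ^ 2 ≤ (inner ℂ (A (p w)) (p w) : ℂ).re)
    (hhigh : ∀ w : V,
      (inner ℂ (A (p w)) (p w) : ℂ).re ≤ (1 - (2 : ℝ) ^ (-(n + 1 : ℤ))) * ‖p w‖ ^ 2)
    (v : V) (C : ℝ)
    (hC : ∀ k ∈ K, ‖A (p v) - π k (A (p v))‖ ≤ C) :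
    ∀ k ∈ K, ‖p v - π k (p v)‖ ≤ 2 * C := by
  intro k hk
  set ε : ℝ := 2 ^ (-(n : ℤ))
  set u := p v
  have hε : 0 < ε := by positivity
  have hε16 : ε ≤ 1 / 16 := calc
    ε ≤ (2 : ℝ) ^ (-4 : ℤ) := zpow_le_zpow_right₀ one_le_two (by omega)
    _ = 1 / 16 := by norm_num
  have hhalf : (2 : ℝ) ^ (-(n + 1 : ℤ)) = ε / 2 := by
    rw [neg_add, zpow_add₀ two_ne_zero, zpow_neg_one, div_eq_mul_inv]
  have hC0 : 0 ≤ C := (norm_nonneg _).trans (hC k hk)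
  have hgap : ∀ w, (inner ℂ ((1 - A) (p w)) (p w)).re =
      ‖p w‖ ^ 2 - (inner ℂ (A (p w)) (p w)).re := fun w => by
    rw [sub_apply, one_apply_eq_self, inner_sub_left, Complex.sub_re, ← RCLike.re_eq_complex_re,
      inner_self_eq_norm_sq]
  have hwindow : ∀ w, ε / 2 * ‖p w‖ ^ 2 ≤ (inner ℂ ((1 - A) (p w)) (p w)).re := fun w => by
    rw [hgap]; linarith [hhalf ▸ hhigh w]
  have hBu : ‖u - A u‖ ≤ ε * ‖u‖ := by
    refine IsStarProjection.norm_apply_le_of_abs_re_inner_le ⟨hpidem, hpsa⟩ (.sub (.one _) hAsa)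
      ((Commute.one_left p).sub_left hcomm) hε.le (fun w => abs_le.2 ⟨?_, ?_⟩) v
    · rw [RCLike.re_eq_complex_re]; nlinarith [hwindow w, sq_nonneg ‖p w‖]
    · rw [RCLike.re_eq_complex_re, hgap]; linarith [hlow w]
  have hM : ∀ g ∈ K, ‖u - π g u‖ ≤ C + 2 * (ε * ‖u‖) := fun g hg =>
    ((π g).toLinearIsometry.norm_sub_apply_le u (A u)).trans (add_le_add (hC g hg) (by linarith))
  by_cases hI : Integrable (fun g => f g • π g u) μ
  · have hquad : ε * ‖u‖ ^ 2 ≤ (C + 2 * (ε * ‖u‖)) ^ 2 := by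
      have havg := two_mul_norm_sq_sub_re_inner_integral_le (𝕜 := ℂ)
        (fun g => (π g).norm_map u) hf0 hf1 hI fun g hg => hM g (hKsupp ▸ subset_tsupport f hg)
      rw [← hAint, inner_re_symm, RCLike.re_eq_complex_re] at havg
      linarith [hgap v ▸ hwindow v]
    linarith [hM k hk, two_mul_le_of_mul_sq_le_sq hε.le hε16 (norm_nonneg u) hC0 hquad]
  · -- The Bochner integral is then `0`, so `A u = 0`, and `hlow` forces `u = 0`.
    have hAu : A u = 0 := by rw [hAint, integral_undef hI]
    have hu : u = 0 := by
      have := hlow v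
      rw [hAu, inner_zero_left, Complex.zero_re] at this
      exact norm_eq_zero.mp (pow_eq_zero_iff two_ne_zero |>.mp (by nlinarith [sq_nonneg ‖u‖]))
    rw [hu, map_zero, sub_zero, norm_zero]
    linarith

/-- Margulis' smoothing lemma: let `f ∈ 𝒜(G)` with support `K` act as the self-adjoint
averaging operator `A` on a unitary `G`-representation `V`, and let `p` be the spectral
projection of `A` for the window `[1 − 2⁻ⁿ, 1 − 2⁻⁽ⁿ⁺¹⁾]` (encoded by the quadratic-form
bounds `hlow`, `hhigh`). Then for `n ≥ 4`,
`sup_{k∈K} ‖(1−k)pv‖ ≤ 2 sup_{k∈K} ‖(1−k)f pv‖`. -/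
theorem spectral_window_smoothing
    {G : Type*} [Group G] [TopologicalSpace G] [IsTopologicalGroup G] [LocallyCompactSpace G]
    [MeasurableSpace G] [BorelSpace G]
    (μ : Measure G) [μ.IsHaarMeasure]
    {V : Type*} [NormedAddCommGroup V] [InnerProductSpace ℂ V] [CompleteSpace V]
    (π : G →* (V ≃ₗᵢ[ℂ] V))
    (f : G → ℝ) (hfc : Continuous f) (hfsupp : HasCompactSupport f)
    (hf0 : ∀ g, 0 ≤ f g) (hfsymm : ∀ g : G, f g⁻¹ = f g) (hf1 : ∫ g, f g ∂μ = 1)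
    (K : Set G) (hKsupp : K = tsupport f)
    (A : V →L[ℂ] V) (hAint : ∀ v : V, A v = ∫ g, f g • π g v ∂μ)
    (hAsa : IsSelfAdjoint A) (hAnorm : ‖A‖ ≤ 1)
    (n : ℕ) (hn : 4 ≤ n)
    (p : V →L[ℂ] V) (hpidem : p.comp p = p) (hpsa : IsSelfAdjoint p)
    (hcomm : A.comp p = p.comp A)
    (hlow : ∀ w : V,
      (1 - (2 : ℝ) ^ (-(n : ℤ))) * ‖p w‖ ^ 2 ≤ (inner ℂ (A (p w)) (p w) : ℂ).re)
    (hhigh : ∀ w : V,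
      (inner ℂ (A (p w)) (p w) : ℂ).re ≤ (1 - (2 : ℝ) ^ (-(n + 1 : ℤ))) * ‖p w‖ ^ 2)
    (v : V) (C : ℝ)
    (hC : ∀ k ∈ K, ‖A (p v) - π k (A (p v))‖ ≤ C) :
    ∀ k ∈ K, ‖p v - π k (p v)‖ ≤ 2 * C :=
  spectral_window_smoothing_general μ π f hf0 hf1 K hKsupp A hAint hAsa n hn p hpidem hpsa hcomm
    hlow hhigh v C hC
end

section
/- Let Γ be a discrete group in which every nontrivial element has infinite conjugacy class (ICC). Then no finite subgroup of Γ is confined; i.e., for every finite subgroup F ≤ Γ, the trivial subgroup lies in the closure of the conjugation orbit of F in the Chabauty space Sub(Γ) (equivalently, for every finite subset S ⊆ Γ∖{e} there exists γ ∈ Γ with γFγ⁻¹ ∩ S = ∅). -/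
/-!
If every conjugate `γ F γ⁻¹` met `S`, then `Γ` would be covered by the finitely many sets
`{γ | γ x γ⁻¹ = s}` with `x ∈ F`, `s ∈ S`. Each nonempty one is a left coset of the
centralizer of `x`, and `x ≠ 1` since `1 ∉ S`. By B. H. Neumann's lemma one of these centralizers
has finite index, so the conjugacy class of the corresponding `x ≠ 1` is finite, contradicting ICC.
-/

open Pointwise

namespace Subgroup

variable {G : Type*} [Group G]

theorem index_centralizer_singleton (g : G) :
    (centralizer {g}).index = {h : G | IsConj g h}.ncard := by
  rw [centralizer_eq_comap_stabilizer]
  erw [index_comap_of_surjective _ ConjAct.toConjAct.surjective, MulAction.index_stabilizer]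
  congr 1
  ext h
  exact ConjAct.mem_orbit_conjAct.trans isConj_comm

theorem finite_setOf_isConj_of_finiteIndex {g : G} (hfin : (centralizer {g}).FiniteIndex) :
    {h : G | IsConj g h}.Finite :=
  Set.finite_of_ncard_ne_zero (index_centralizer_singleton g ▸ hfin.index_ne_zero)

theorem setOf_conj_eq_subset_smul_centralizer {x y γ : G} (hγ : γ * x * γ⁻¹ = y) :
    {δ : G | δ * x * δ⁻¹ = y} ⊆ γ • (centralizer {x} : Set G) := by
  rintro δ (hδ : δ * x * δ⁻¹ = y)
  rw [mem_leftCoset_iff, SetLike.mem_coe, mem_centralizer_singleton_iff]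
  rw [← hδ] at hγ
  calc γ⁻¹ * δ * x = γ⁻¹ * (δ * x * δ⁻¹) * δ := by group
    _ = γ⁻¹ * (γ * x * γ⁻¹) * δ := by rw [hγ]
    _ = x * (γ⁻¹ * δ) := by group

theorem exists_finiteIndex_of_cover_of_subset_leftCoset {ι : Type*} {s : Finset ι}
    {A : ι → Set G} {H : ι → Subgroup G} (hA : ∀ i ∈ s, ∀ a ∈ A i, A i ⊆ a • (H i : Set G))
    (hcovers : ⋃ i ∈ s, A i = Set.univ) :
    ∃ i ∈ s, (A i).Nonempty ∧ (H i).FiniteIndex := by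
  classical
  let g : ι → G := fun i ↦ if h : (A i).Nonempty then h.some else 1
  have hsub : ∀ i ∈ s, (A i).Nonempty → A i ⊆ g i • (H i : Set G) := fun i hi hne ↦ by
    simpa only [g, dif_pos hne] using hA i hi _ hne.some_mem
  have hcovers' : ⋃ i ∈ s.filter (A · |>.Nonempty), g i • (H i : Set G) = Set.univ := by
    refine Set.eq_univ_of_univ_subset (hcovers ▸ Set.iUnion₂_subset fun i hi a ha ↦ ?_)
    exact Set.mem_biUnion (Finset.mem_filter.mpr ⟨hi, a, ha⟩) (hsub i hi ⟨a, ha⟩ ha)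
  obtain ⟨i, hi, hfin⟩ := exists_finiteIndex_of_leftCoset_cover hcovers'
  obtain ⟨his, hne⟩ := Finset.mem_filter.mp hi
  exact ⟨i, his, hne, hfin⟩

end Subgroup

/-- In an ICC group, no finite subgroup is confined: for every finite subgroup `F` and
every finite set `S` of nontrivial elements, some conjugate of `F` avoids `S`. -/
theorem finite_subgroup_unconfined_of_icc {Γ : Type*} [Group Γ]
    (hicc : ∀ g : Γ, g ≠ 1 → {h : Γ | IsConj g h}.Infinite)
    (F : Subgroup Γ) (hF : (F : Set Γ).Finite)
    (S : Finset Γ) (hS : (1 : Γ) ∉ S) :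
    ∃ γ : Γ, ∀ x ∈ F, γ * x * γ⁻¹ ∉ S := by
  by_contra! hcon
  have hcovers : ⋃ p ∈ hF.toFinset ×ˢ S, {γ : Γ | γ * p.1 * γ⁻¹ = p.2} = Set.univ := by
    refine Set.eq_univ_of_forall fun γ ↦ ?_
    obtain ⟨x, hxF, hxS⟩ := hcon γ
    have hmem : (x, γ * x * γ⁻¹) ∈ hF.toFinset ×ˢ S :=
      Finset.mem_product.mpr ⟨hF.mem_toFinset.mpr hxF, hxS⟩
    exact Set.mem_biUnion hmem (show γ * x * γ⁻¹ = γ * x * γ⁻¹ from rfl)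
  obtain ⟨p, hp, ⟨γ, hγ : γ * p.1 * γ⁻¹ = p.2⟩, hfin⟩ :=
    Subgroup.exists_finiteIndex_of_cover_of_subset_leftCoset
      (H := fun p : Γ × Γ ↦ Subgroup.centralizer {p.1})
      (fun _ _ _ hγ ↦ Subgroup.setOf_conj_eq_subset_smul_centralizer hγ) hcovers
  have hp1 : p.1 ≠ 1 := by
    intro h1
    rw [h1, mul_one, mul_inv_cancel] at hγ
    exact hS (hγ ▸ (Finset.mem_product.mp hp).2)
  exact hicc p.1 hp1 (Subgroup.finite_setOf_isConj_of_finiteIndex hfin)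
end

section
/- Let Γ be a discrete group having no finite confined subgroups. Then the property of being a confined subgroup of Γ is a commensurability invariant: if Δ ≤ Γ is confined and Δ₁ ≤ Δ has finite index in Δ, then Δ₁ is confined in Γ. -/
/-- A subgroup `Λ` of a discrete group `Γ` is confined if some finite set of nontrivial
elements meets every conjugate of `Λ`. -/
def IsConfinedSubgroup {Γ : Type*} [Group Γ] (Λ : Subgroup Γ) : Prop :=
  ∃ S : Finset Γ, (1 : Γ) ∉ S ∧ ∀ γ : Γ, ∃ s ∈ S, γ⁻¹ * s * γ ∈ Λ

/-!
If `Δ₁` is not confined, the sets `{γ | γ⁻¹ g γ ∉ Δ₁}` for `g ≠ 1` have the finite intersection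
property, so some ultrafilter `U` makes the limit of the conjugates of `Δ₁` along `U` trivial.
The limit of the conjugates of `Δ` along the same `U` is confined, because a finite witness set
for `Δ` works for it. It is also finite: a conjugator `γ` that moves `n` of its elements into `Δ`
while keeping their pairwise quotients out of `Δ₁` separates them into `n` distinct cosets of
`Δ₁` in `Δ`, so `n ≤ [Δ : Δ₁]`.
-/

open Filter

namespace Subgroup

variable {Γ : Type*} [Group Γ]

/-- Along an ultrafilter, this is the Chabauty limit of the conjugates `γ Λ γ⁻¹`. -/
def conjLimit (Λ : Subgroup Γ) (l : Filter Γ) : Subgroup Γ where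
  carrier := {g | ∀ᶠ γ in l, γ⁻¹ * g * γ ∈ Λ}
  one_mem' := by simp
  mul_mem' {a b} ha hb := by
    filter_upwards [ha, hb] with γ ha hb
    simpa only [mul_assoc, mul_inv_cancel_left] using Λ.mul_mem ha hb
  inv_mem' {a} ha := by
    filter_upwards [ha] with γ ha
    simpa only [mul_inv_rev, inv_inv, mul_assoc] using Λ.inv_mem ha

theorem mem_conjLimit {Λ : Subgroup Γ} {l : Filter Γ} {g : Γ} :
    g ∈ Λ.conjLimit l ↔ ∀ᶠ γ in l, γ⁻¹ * g * γ ∈ Λ :=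
  Iff.rfl

theorem exists_ultrafilter_conjLimit_eq_bot {Λ : Subgroup Γ} (hΛ : ¬ IsConfinedSubgroup Λ) :
    ∃ U : Ultrafilter Γ, Λ.conjLimit U = ⊥ := by
  simp only [IsConfinedSubgroup, not_exists, not_and, not_forall] at hΛ
  obtain ⟨U, hU⟩ := Ultrafilter.exists_ultrafilter_of_finite_inter_nonempty
    ((fun g => {γ | γ⁻¹ * g * γ ∉ Λ}) '' {g | g ≠ 1}) fun T hT => by
      obtain ⟨S, hS1, rfl⟩ := Finset.subset_set_image_iff.mp hT
      obtain ⟨γ, hγ⟩ := hΛ S fun h1 => hS1 h1 rfl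
      exact ⟨γ, by simpa using hγ⟩
  refine ⟨U, (Subgroup.eq_bot_iff_forall _).mpr fun g hg => ?_⟩
  by_contra hg1
  exact (U.eventually_not.mp (hU ⟨g, hg1, rfl⟩)) hg

theorem _root_.IsConfinedSubgroup.conjLimit {Λ : Subgroup Γ} (hΛ : IsConfinedSubgroup Λ)
    (U : Ultrafilter Γ) : IsConfinedSubgroup (Λ.conjLimit U) := by
  obtain ⟨S, hS1, hS⟩ := hΛ
  refine ⟨S, hS1, fun γ₀ => ?_⟩
  have : ∀ᶠ γ in U, ∃ s ∈ (S : Set Γ), γ⁻¹ * (γ₀⁻¹ * s * γ₀) * γ ∈ Λ :=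
    Eventually.of_forall fun γ => by
      simpa only [Finset.mem_coe, mul_inv_rev, mul_assoc] using hS (γ₀ * γ)
  simpa only [Finset.mem_coe, mem_conjLimit] using
    (U.eventually_exists_mem_iff S.finite_toSet).mp this

theorem card_le_relIndex_of_conjLimit_eq_bot {Λ Λ₁ : Subgroup Γ} (hfi : Λ₁.relIndex Λ ≠ 0)
    {U : Ultrafilter Γ} (hU : Λ₁.conjLimit U = ⊥) {t : Finset Γ}
    (ht : (t : Set Γ) ⊆ Λ.conjLimit U) : t.card ≤ Λ₁.relIndex Λ := by
  have hsep : ∀ᶠ γ in U, ∀ a ∈ t, ∀ b ∈ t, a ≠ b → γ⁻¹ * (a⁻¹ * b) * γ ∉ Λ₁ := by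
    simp only [eventually_all_finset, eventually_imp_distrib_left]
    intro a _ b _ hab
    refine U.eventually_not.mpr fun h => hab ?_
    have : a⁻¹ * b ∈ Λ₁.conjLimit U := mem_conjLimit.mpr h
    rwa [hU, mem_bot, inv_mul_eq_one] at this
  obtain ⟨γ, hγΛ, hγsep⟩ := ((eventually_all_finset t).mpr fun a ha => ht ha).and hsep |>.exists
  have : (Λ₁.subgroupOf Λ).FiniteIndex := ⟨hfi⟩
  let f : t → Λ ⧸ Λ₁.subgroupOf Λ := fun a => (⟨γ⁻¹ * a * γ, hγΛ a a.2⟩ : Λ)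
  have hf : Function.Injective f := by
    intro a b hab
    by_contra hne
    refine hγsep a a.2 b b.2 (Subtype.coe_injective.ne hne) ?_
    rw [QuotientGroup.eq, mem_subgroupOf] at hab
    simpa only [coe_mul, coe_inv, mul_inv_rev, inv_inv, mul_assoc, mul_inv_cancel_left] using hab
  calc t.card = Nat.card t := (Nat.card_eq_finsetCard t).symm
    _ ≤ Λ₁.relIndex Λ := Nat.card_le_card_of_injective f hf

theorem finite_conjLimit_of_conjLimit_eq_bot {Λ Λ₁ : Subgroup Γ} (hfi : Λ₁.relIndex Λ ≠ 0)
    {U : Ultrafilter Γ} (hU : Λ₁.conjLimit U = ⊥) : (Λ.conjLimit U : Set Γ).Finite := by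
  by_contra hinf
  obtain ⟨t, hts, htc⟩ := Set.Infinite.exists_subset_card_eq hinf (Λ₁.relIndex Λ + 1)
  have := card_le_relIndex_of_conjLimit_eq_bot hfi hU hts
  omega

end Subgroup

open Subgroup in
theorem confined_of_finiteIndex_general {Γ : Type*} [Group Γ]
    (hnofin : ∀ F : Subgroup Γ, (F : Set Γ).Finite → ¬ IsConfinedSubgroup F)
    (Δ Δ₁ : Subgroup Γ) (hfi : Δ₁.relIndex Δ ≠ 0)
    (hΔ : IsConfinedSubgroup Δ) : IsConfinedSubgroup Δ₁ := by
  by_contra hΔ₁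
  obtain ⟨U, hU⟩ := exists_ultrafilter_conjLimit_eq_bot hΔ₁
  exact hnofin _ (finite_conjLimit_of_conjLimit_eq_bot hfi hU) (hΔ.conjLimit U)

/-- In a group without finite confined subgroups, being confined is a commensurability
invariant: a finite-index subgroup of a confined subgroup is confined. -/
theorem confined_of_finiteIndex {Γ : Type*} [Group Γ]
    (hnofin : ∀ F : Subgroup Γ, (F : Set Γ).Finite → ¬ IsConfinedSubgroup F)
    (Δ Δ₁ : Subgroup Γ) (hle : Δ₁ ≤ Δ) (hfi : Δ₁.relIndex Δ ≠ 0)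
    (hΔ : IsConfinedSubgroup Δ) : IsConfinedSubgroup Δ₁ :=
  confined_of_finiteIndex_general hnofin Δ Δ₁ hfi hΔ
end

section
/- Let G be a locally compact group with the NSS property (some identity neighborhood contains no nontrivial closed subgroup). Then every weakly confined closed subgroup of G is confined. In particular, in a real Lie group every weakly confined closed subgroup is confined. -/
/-!
Fix a closed symmetric identity neighbourhood `W` inside the NSS neighbourhood and a compact
identity neighbourhood `V ⊆ W`. If all powers of `x ≠ 1` stayed in `W`, the closure of `⟨x⟩`
would be a nontrivial closed subgroup inside `W`; so the powers of `x` leave `V`, and the first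
one to do so lies in the compact set `V * C ∖ interior V`, which avoids `1`. Taking `x ∈ C` with
`g⁻¹ x g ∈ H` from weak confinement, that power is still conjugated into `H` by `g`.
-/

open scoped Pointwise

section

variable {G : Type*} [Group G]

theorem exists_pow_mem_and_pow_succ_notMem {V : Set G} (h1 : (1 : G) ∈ V) {x : G} {n : ℕ}
    (hn : x ^ n ∉ V) : ∃ m : ℕ, x ^ m ∈ V ∧ x ^ (m + 1) ∉ V := by
  by_contra! h
  exact hn (Nat.rec (by simpa using h1) h n)

theorem zpowers_subset_of_pow_mem {W : Set G} (hW : W⁻¹ = W) {x : G}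
    (hx : ∀ n : ℕ, x ^ n ∈ W) : (Subgroup.zpowers x : Set G) ⊆ W := by
  rintro _ ⟨k | k, rfl⟩
  · simpa using hx k
  · rw [← hW]
    simpa [zpow_negSucc] using hx (k + 1)

variable [TopologicalSpace G] [IsTopologicalGroup G]

theorem exists_pow_notMem_of_noSmallSubgroups {W : Set G} (hWc : IsClosed W) (hWinv : W⁻¹ = W)
    (hW : ∀ H : Subgroup G, IsClosed (H : Set G) → (H : Set G) ⊆ W → H = ⊥)
    {x : G} (hx : x ≠ 1) : ∃ n : ℕ, x ^ n ∉ W := by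
  by_contra! h
  have hbot : (Subgroup.zpowers x).topologicalClosure = ⊥ :=
    hW _ (Subgroup.zpowers x).isClosed_topologicalClosure
      (closure_minimal (zpowers_subset_of_pow_mem hWinv h) hWc)
  have hxmem := (Subgroup.zpowers x).le_topologicalClosure (Subgroup.mem_zpowers x)
  exact hx (by simpa [hbot] using hxmem)

end

theorem confined_of_weakly_confined_nss_general
    {G : Type*} [Group G] [TopologicalSpace G] [IsTopologicalGroup G]
    [LocallyCompactSpace G]
    (hNSS : ∃ U ∈ nhds (1 : G), ∀ H : Subgroup G, IsClosed (H : Set G) →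
      (H : Set G) ⊆ U → H = ⊥)
    (H : Subgroup G)
    (hweak : ∃ C : Set G, IsCompact C ∧ ∀ g : G, ∃ x ∈ C, x ≠ 1 ∧ g⁻¹ * x * g ∈ H) :
    ∃ C : Set G, IsCompact C ∧ (1 : G) ∉ C ∧ ∀ g : G, ∃ x ∈ C, g⁻¹ * x * g ∈ H := by
  obtain ⟨U, hU, hUnss⟩ := hNSS
  obtain ⟨W, hW, hWc, hWinv, hWW⟩ := exists_closed_nhds_one_inv_eq_mul_subset hU
  have hWU : W ⊆ U := (Set.subset_mul_right W (mem_of_mem_nhds hW)).trans hWW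
  obtain ⟨V, hV, hVW, hVc⟩ := local_compact_nhds hW
  obtain ⟨C, hCc, hC⟩ := hweak
  refine ⟨(V * C) \ interior V, (hVc.mul hCc).diff isOpen_interior,
    fun h ↦ h.2 (mem_interior_iff_mem_nhds.2 hV), fun g ↦ ?_⟩
  obtain ⟨x, hxC, hx1, hxH⟩ := hC g
  obtain ⟨n, hn⟩ := exists_pow_notMem_of_noSmallSubgroups hWc hWinv
    (fun K hK hKW ↦ hUnss K hK (hKW.trans hWU)) hx1
  obtain ⟨m, hm, hm1⟩ := exists_pow_mem_and_pow_succ_notMem (mem_of_mem_nhds hV)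
    (fun h ↦ hn (hVW h))
  refine ⟨x ^ (m + 1),
    ⟨pow_succ x m ▸ Set.mul_mem_mul hm hxC, fun h ↦ hm1 (interior_subset h)⟩, ?_⟩
  have hconj : (g⁻¹ * x * g) ^ (m + 1) = g⁻¹ * x ^ (m + 1) * g := by
    simpa using conj_pow (a := g⁻¹) (b := x) (i := m + 1)
  exact hconj ▸ H.pow_mem hxH (m + 1)

/-- In a locally compact group with no small subgroups, every weakly confined closed
subgroup is confined: the compact set meeting all conjugates nontrivially can be chosen
inside `G ∖ {e}`. -/
theorem confined_of_weakly_confined_nss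
    {G : Type*} [Group G] [TopologicalSpace G] [IsTopologicalGroup G]
    [LocallyCompactSpace G] [T2Space G]
    (hNSS : ∃ U ∈ nhds (1 : G), ∀ H : Subgroup G, IsClosed (H : Set G) →
      (H : Set G) ⊆ U → H = ⊥)
    (H : Subgroup G) (hHclosed : IsClosed (H : Set G))
    (hweak : ∃ C : Set G, IsCompact C ∧ ∀ g : G, ∃ x ∈ C, x ≠ 1 ∧ g⁻¹ * x * g ∈ H) :
    ∃ C : Set G, IsCompact C ∧ (1 : G) ∉ C ∧ ∀ g : G, ∃ x ∈ C, g⁻¹ * x * g ∈ H :=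
  confined_of_weakly_confined_nss_general hNSS H hweak
end

section
/- Let μ be a probability measure on a group G acting on a space X, and let Φ: X → [a,∞) (a > 0) be a proper continuous function satisfying the Margulis inequality μ*Φ(x) := ∫ Φ(gx) dμ(g) < cΦ(x) + b for all x, with 0 < c < 1, b > 0. Then there exists an increasing sequence 0 < L₁ < L₂ < ⋯ such that for every i ∈ ℕ and every point z with Φ(z) ≥ Lᵢ one has μ^{*i} * Φ(z) < ((1+c)/2)^i Φ(z), where μ^{*i} denotes the i-fold convolution power. -/
open MeasureTheory

/-- Improving a Margulis function by iterating the averaging operator: for a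
`(μ,c,b)`-Margulis function `Φ` there is an increasing sequence of thresholds `Lᵢ` such
that `μ^{*i} * Φ(z) < ((1+c)/2)^i Φ(z)` whenever `Φ(z) ≥ Lᵢ`. -/
theorem margulis_function_iterate
    {G X : Type*} [Group G] [TopologicalSpace G] [MeasurableSpace G] [OpensMeasurableSpace G]
    [TopologicalSpace X] [LocallyCompactSpace X] [MulAction G X]
    (hact : Continuous fun p : G × X => p.1 • p.2)
    (μ : Measure G) [IsProbabilityMeasure μ]
    (hμc : ∃ K : Set G, IsCompact K ∧ μ Kᶜ = 0)
    (a b c : ℝ) (ha : 0 < a) (hc0 : 0 < c) (hc1 : c < 1) (hb : 0 < b)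
    (Φ : X → ℝ) (hΦproper : IsProperMap Φ) (hΦa : ∀ x, a ≤ Φ x)
    (hmar : ∀ x : X, ∫ g, Φ (g • x) ∂μ < c * Φ x + b) :
    ∃ L : ℕ → ℝ, (∀ i, 0 < L i) ∧ StrictMono L ∧
      ∀ i : ℕ, 1 ≤ i → ∀ z : X, L i ≤ Φ z →
        ((fun Ψ : X → ℝ => fun x => ∫ g, Ψ (g • x) ∂μ)^[i] Φ) z <
          ((1 + c) / 2) ^ i * Φ z := by
  set T : (X → ℝ) → X → ℝ := fun Ψ x => ∫ g, Ψ (g • x) ∂μ with hTdef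
  set θ : ℝ := (1 + c) / 2 with hθdef
  set D : ℝ := b / (1 - c) with hDdef
  have h1c : (0:ℝ) < 1 - c := by linarith
  have hθ0 : 0 < θ := by rw [hθdef]; linarith
  have hθc : c < θ := by rw [hθdef]; linarith
  have hD0 : 0 < D := div_pos hb h1c
  have hDb : D * (1 - c) = b := div_mul_cancel₀ b (ne_of_gt h1c)
  have hΦ0 : ∀ y, 0 ≤ Φ y := fun y => ha.le.trans (hΦa y)
  -- integrability of g ↦ Φ (g • z)
  have hint : ∀ z : X, Integrable (fun g => Φ (g • z)) μ := by
    intro z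
    obtain ⟨K, hK, hKc⟩ := hμc
    have hcont : Continuous fun g : G => Φ (g • z) :=
      hΦproper.continuous.comp (hact.comp (continuous_id.prodMk continuous_const))
    have hbdd : BddAbove ((fun g : G => Φ (g • z)) '' K) :=
      (hK.image hcont).bddAbove
    obtain ⟨C, hC⟩ := hbdd
    have haeK : ∀ᵐ g ∂μ, g ∈ K := by
      rw [ae_iff]; exact hKc
    refine Integrable.mono' (integrable_const C) hcont.aestronglyMeasurable ?_
    filter_upwards [haeK] with g hg
    rw [Real.norm_eq_abs, abs_of_nonneg (hΦ0 _)]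
    exact hC ⟨g, hg, rfl⟩
  -- nonnegativity of iterates
  have hT0 : ∀ i (y : X), 0 ≤ (T^[i] Φ) y := by
    intro i
    induction i with
    | zero => exact hΦ0
    | succ i ih =>
      intro y
      rw [Function.iterate_succ_apply']
      exact integral_nonneg fun g => ih _
  -- crude upper bound on iterates
  have hTub : ∀ i (y : X), (T^[i] Φ) y ≤ Φ y + D * i := by
    intro i
    induction i with
    | zero => intro y; simp
    | succ i ih =>
      intro y
      rw [Function.iterate_succ_apply']
      have h1 : (∫ g, (T^[i] Φ) (g • y) ∂μ) ≤ ∫ g, (Φ (g • y) + D * i) ∂μ := by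
        refine integral_mono_of_nonneg (ae_of_all _ fun g => hT0 i _)
          ((hint y).add (integrable_const _)) (ae_of_all _ fun g => ih _)
      have h2 : (∫ g, (Φ (g • y) + D * i) ∂μ) = (∫ g, Φ (g • y) ∂μ) + D * i := by
        rw [integral_add (hint y) (integrable_const _), integral_const]
        simp [measure_univ]
      have h3 := hmar y
      have hcΦ : c * Φ y ≤ Φ y := by nlinarith [hΦ0 y]
      have hbD : b ≤ D := by nlinarith
      have : (T Φ) y = ∫ g, Φ (g • y) ∂μ := rfl
      push_cast
      calc (∫ g, (T^[i] Φ) (g • y) ∂μ) ≤ (∫ g, Φ (g • y) ∂μ) + D * i := by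
            rw [← h2]; exact h1
        _ ≤ (c * Φ y + b) + D * i := by linarith
        _ ≤ Φ y + D * (i + 1) := by nlinarith
  -- the thresholds
  let L : ℕ → ℝ := fun n =>
    n.rec D (fun m Lm => max (max (Lm + 1) (2 * D))
      ((b + (Lm + D * m) / θ ^ m) / (θ - c)))
  have hLsucc : ∀ n, L (n + 1) = max (max (L n + 1) (2 * D))
      ((b + (L n + D * n) / θ ^ n) / (θ - c)) := fun n => rfl
  have hLmono : StrictMono L := by
    apply strictMono_nat_of_lt_succ
    intro n
    rw [hLsucc]
    exact lt_of_lt_of_le (lt_add_one _) ((le_max_left _ _).trans (le_max_left _ _))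
  have hLpos : ∀ i, 0 < L i := fun i => hD0.trans_le (hLmono.monotone (Nat.zero_le i))
  refine ⟨L, hLpos, hLmono, ?_⟩
  intro i hi
  induction i, hi using Nat.le_induction with
  | base =>
    intro z hz
    have h2D : 2 * D ≤ L 1 := (le_max_right _ _).trans (le_max_left _ _)
    have hΦz : 2 * D ≤ Φ z := h2D.trans hz
    have h := hmar z
    rw [Function.iterate_one]
    show (∫ g, Φ (g • z) ∂μ) < θ ^ 1 * Φ z
    rw [pow_one]
    nlinarith
  | succ i hi ih =>
    intro z hz
    set M : ℝ := L i + D * i with hMdef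
    have hM0 : 0 ≤ M := add_nonneg (hLpos i).le (by positivity)
    have hpow : (0:ℝ) < θ ^ i := pow_pos hθ0 i
    have hpt : ∀ y : X, (T^[i] Φ) y ≤ θ ^ i * Φ y + M := by
      intro y
      rcases le_or_gt (L i) (Φ y) with h | h
      · have h1 := ih y h
        nlinarith
      · have h1 := hTub i y
        have h2 : 0 ≤ θ ^ i * Φ y := mul_nonneg hpow.le (hΦ0 y)
        have h3 := hMdef
        linarith
    rw [Function.iterate_succ_apply']
    show (∫ g, (T^[i] Φ) (g • z) ∂μ) < θ ^ (i + 1) * Φ z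
    have key : (∫ g, (T^[i] Φ) (g • z) ∂μ) ≤ θ ^ i * (∫ g, Φ (g • z) ∂μ) + M := by
      have h1 : (∫ g, (T^[i] Φ) (g • z) ∂μ) ≤ ∫ g, (θ ^ i * Φ (g • z) + M) ∂μ :=
        integral_mono_of_nonneg (ae_of_all _ fun g => hT0 i _)
          (((hint z).const_mul _).add (integrable_const _)) (ae_of_all _ fun g => hpt _)
      have h2 : (∫ g, (θ ^ i * Φ (g • z) + M) ∂μ)
          = θ ^ i * (∫ g, Φ (g • z) ∂μ) + M := by
        rw [integral_add ((hint z).const_mul _) (integrable_const _),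
          integral_const_mul, integral_const]
        simp [measure_univ]
      linarith [h1, h2.le]
    have hmz := hmar z
    have hL2 : (b + M / θ ^ i) / (θ - c) ≤ Φ z := by
      refine le_trans ?_ hz
      rw [hLsucc]
      exact le_max_right _ _
    have hθcpos : (0:ℝ) < θ - c := by linarith
    have h2 : b + M / θ ^ i ≤ (θ - c) * Φ z := by
      rw [div_le_iff₀ hθcpos] at hL2
      linarith [hL2]
    have h4 : θ ^ (i + 1) = θ ^ i * θ := pow_succ θ i
    have h5 : θ ^ i * (b + M / θ ^ i) = θ ^ i * b + M := by
      field_simp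
    have h6 : θ ^ i * b + M ≤ θ ^ i * ((θ - c) * Φ z) :=
      h5 ▸ mul_le_mul_of_nonneg_left h2 hpow.le
    have h7 : θ ^ (i + 1) * Φ z = θ ^ i * θ * Φ z := by rw [h4]
    nlinarith [key, mul_lt_mul_of_pos_left hmz hpow, h6, h7]
end

section
/- Let H be a Hilbert space, μ a self-adjoint contraction (Markov operator) on H, and P', P orthogonal projections with P P' = P' P = P' and μP' = PμP'. Suppose ‖PμP‖_op ≤ C for some 0 < C < 1. If (fₙ) is a sequence of unit vectors with ‖μfₙ‖ → 1, then limsupₙ ‖P' fₙ‖² ≤ (2C/(C²+1))² ≤ 4C². -/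
/-!
Split `f = P'f + (f - P'f)`. Since `AP' = (PAP)P'` and the two pieces are orthogonal,
`‖Af‖ ≤ C x + √(1 - x²)` with `x = ‖P'f‖`. For `y := ‖Af‖ > C` this confines `x` below the larger
root of `(1 + C²)x² - 2Cxy + y² - 1`, which depends continuously on `y` and equals
`2C/(C² + 1)` at `y = 1`.
-/

open Filter Topology

theorem IsStarProjection.norm_sq_add_norm_sub_sq {𝕜 E : Type*} [RCLike 𝕜]
    [NormedAddCommGroup E] [InnerProductSpace 𝕜 E] [CompleteSpace E]
    {p : E →L[𝕜] E} (hp : IsStarProjection p) (v : E) : ‖p v‖ ^ 2 + ‖v - p v‖ ^ 2 = ‖v‖ ^ 2 := by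
  obtain ⟨K, _, rfl⟩ := isStarProjection_iff_eq_starProjection.mp hp
  rw [K.norm_sq_eq_add_norm_sq_starProjection v, K.starProjection_orthogonal_val]

theorem ContinuousLinearMap.norm_apply_le_of_comp_eq_comp {𝕜 E F : Type*}
    [NontriviallyNormedField 𝕜]
    [SeminormedAddCommGroup E] [SeminormedAddCommGroup F] [NormedSpace 𝕜 E] [NormedSpace 𝕜 F]
    {a b : E →L[𝕜] F} {q : E →L[𝕜] E} (h : a.comp q = b.comp q) (v : E) :
    ‖a v‖ ≤ ‖b‖ * ‖q v‖ + ‖a‖ * ‖v - q v‖ := by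
  have hq : a (q v) = b (q v) := congr($h v)
  have hsplit : a v = b (q v) + a (v - q v) := by rw [map_sub, ← hq, add_sub_cancel]
  rw [hsplit]
  exact (norm_add_le _ _).trans (add_le_add (b.le_opNorm _) (a.le_opNorm _))

/-- The larger root in `x` of `Cx + √(1 - x²) = y`. -/
noncomputable def projBound (C y : ℝ) : ℝ := (C * y + √(1 + C ^ 2 - y ^ 2)) / (1 + C ^ 2)

theorem continuous_projBound (C : ℝ) : Continuous (projBound C) := by
  unfold projBound; fun_prop

theorem projBound_one {C : ℝ} (hC : 0 ≤ C) : projBound C 1 = 2 * C / (C ^ 2 + 1) := by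
  rw [projBound, show 1 + C ^ 2 - 1 ^ 2 = C ^ 2 by ring, Real.sqrt_sq hC]
  ring

theorem le_projBound {C x s y : ℝ} (hxs : x ^ 2 + s ^ 2 = 1)
    (hCx : C * x ≤ y) (hy : y ≤ C * x + s) : x ≤ projBound C y := by
  have hsq : ((1 + C ^ 2) * x - C * y) ^ 2 ≤ 1 + C ^ 2 - y ^ 2 := by
    have : (y - C * x) ^ 2 ≤ s ^ 2 := pow_le_pow_left₀ (sub_nonneg.2 hCx) (by linarith) 2
    nlinarith
  rw [projBound, le_div_iff₀ (by positivity)]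
  linarith [Real.le_sqrt_of_sq_le hsq]

theorem limsup_sq_le_of_le_mul_add {C : ℝ} (hC0 : 0 ≤ C) (hC1 : C < 1) {x s y : ℕ → ℝ}
    (hx : ∀ n, 0 ≤ x n) (hxs : ∀ n, x n ^ 2 + s n ^ 2 = 1) (hy : ∀ n, y n ≤ C * x n + s n)
    (hy1 : Tendsto y atTop (𝓝 1)) :
    limsup (fun n ↦ x n ^ 2) atTop ≤ (2 * C / (C ^ 2 + 1)) ^ 2 := by
  have hCx : ∀ᶠ n in atTop, C * x n ≤ y n := by
    filter_upwards [hy1.eventually (lt_mem_nhds hC1)] with n hn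
    have : x n ≤ 1 := by nlinarith [hxs n, sq_nonneg (s n)]
    exact (mul_le_of_le_one_right hC0 this).trans hn.le
  have hbound : ∀ᶠ n in atTop, x n ^ 2 ≤ projBound C (y n) ^ 2 := by
    filter_upwards [hCx] with n hn
    exact pow_le_pow_left₀ (hx n) (le_projBound (hxs n) hn (hy n)) 2
  have hlim : Tendsto (fun n ↦ projBound C (y n) ^ 2) atTop (𝓝 ((2 * C / (C ^ 2 + 1)) ^ 2)) := by
    rw [← projBound_one hC0]
    exact (((continuous_projBound C).tendsto 1).comp hy1).pow 2
  calc limsup (fun n ↦ x n ^ 2) atTop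
      ≤ limsup (fun n ↦ projBound C (y n) ^ 2) atTop :=
        limsup_le_limsup hbound (isCoboundedUnder_le_of_le atTop fun n ↦ sq_nonneg (x n))
          hlim.isBoundedUnder_le
    _ = (2 * C / (C ^ 2 + 1)) ^ 2 := hlim.limsup_eq

theorem limsup_proj_sq_le_of_markov_contraction_general
    {H : Type*} [NormedAddCommGroup H] [InnerProductSpace ℂ H] [CompleteSpace H]
    (A P P' : H →L[ℂ] H)
    (hAnorm : ‖A‖ ≤ 1)
    (hP' : IsSelfAdjoint P') (hP'idem : P'.comp P' = P')
    (hPP' : P.comp P' = P')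
    (hAP' : A.comp P' = P.comp (A.comp P'))
    (C : ℝ) (hC0 : 0 < C) (hC1 : C < 1)
    (hnorm : ‖P.comp (A.comp P)‖ ≤ C)
    (f : ℕ → H) (hf : ∀ n, ‖f n‖ = 1)
    (hAf : Filter.Tendsto (fun n => ‖A (f n)‖) Filter.atTop (nhds 1)) :
    (Filter.atTop.limsup fun n => ‖P' (f n)‖ ^ 2) ≤ (2 * C / (C ^ 2 + 1)) ^ 2 ∧
      (2 * C / (C ^ 2 + 1)) ^ 2 ≤ 4 * C ^ 2 := by
  have hcomp : A.comp P' = (P.comp (A.comp P)).comp P' := by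
    simp only [ContinuousLinearMap.comp_assoc, hPP', ← hAP']
  have hsplit (n : ℕ) : ‖A (f n)‖ ≤ C * ‖P' (f n)‖ + ‖f n - P' (f n)‖ :=
    calc ‖A (f n)‖ ≤ ‖P.comp (A.comp P)‖ * ‖P' (f n)‖ + ‖A‖ * ‖f n - P' (f n)‖ :=
          ContinuousLinearMap.norm_apply_le_of_comp_eq_comp hcomp (f n)
      _ ≤ C * ‖P' (f n)‖ + 1 * ‖f n - P' (f n)‖ := by gcongr
      _ = C * ‖P' (f n)‖ + ‖f n - P' (f n)‖ := by rw [one_mul]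
  have hpyth (n : ℕ) : ‖P' (f n)‖ ^ 2 + ‖f n - P' (f n)‖ ^ 2 = 1 := by
    rw [IsStarProjection.norm_sq_add_norm_sub_sq ⟨hP'idem, hP'⟩, hf n, one_pow]
  refine ⟨limsup_sq_le_of_le_mul_add hC0.le hC1 (fun n ↦ norm_nonneg _) hpyth hsplit hAf, ?_⟩
  rw [div_pow, mul_pow, show (2 : ℝ) ^ 2 = 4 by norm_num]
  exact div_le_self (by positivity) (one_le_pow₀ (le_add_of_nonneg_left (sq_nonneg C)))

/-- Abstract quantitative no-escape-of-mass: if `A` is a self-adjoint contraction,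
`P, P'` orthogonal projections with `PP' = P'P = P'` and `AP' = PAP'`, `‖PAP‖ ≤ C < 1`,
and `(fₙ)` are unit vectors with `‖Afₙ‖ → 1`, then
`limsup ‖P'fₙ‖² ≤ (2C/(C²+1))² ≤ 4C²`. -/
theorem limsup_proj_sq_le_of_markov_contraction
    {H : Type*} [NormedAddCommGroup H] [InnerProductSpace ℂ H] [CompleteSpace H]
    (A P P' : H →L[ℂ] H)
    (hA : IsSelfAdjoint A) (hAnorm : ‖A‖ ≤ 1)
    (hP : IsSelfAdjoint P) (hPidem : P.comp P = P)
    (hP' : IsSelfAdjoint P') (hP'idem : P'.comp P' = P')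
    (hPP' : P.comp P' = P') (hP'P : P'.comp P = P')
    (hAP' : A.comp P' = P.comp (A.comp P'))
    (C : ℝ) (hC0 : 0 < C) (hC1 : C < 1)
    (hnorm : ‖P.comp (A.comp P)‖ ≤ C)
    (f : ℕ → H) (hf : ∀ n, ‖f n‖ = 1)
    (hAf : Filter.Tendsto (fun n => ‖A (f n)‖) Filter.atTop (nhds 1)) :
    (Filter.atTop.limsup fun n => ‖P' (f n)‖ ^ 2) ≤ (2 * C / (C ^ 2 + 1)) ^ 2 ∧
      (2 * C / (C ^ 2 + 1)) ^ 2 ≤ 4 * C ^ 2 :=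
  limsup_proj_sq_le_of_markov_contraction_general A P P' hAnorm hP' hP'idem hPP' hAP' C hC0 hC1
    hnorm f hf hAf
end
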